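/- arXiv:1808.08540 — 6 statements merged into one kernel-verified Lean document; each statement's English description precedes it below -/
import Mathlib

section
/- Let A, B ∈ ℂ^{n×n} and for θ ∈ ℝ set Δ_θ = A + B·e^{−iθ}. If sup_{θ∈[0,2π]} ρ(Δ_θ) < 1, where ρ denotes the spectral radius, then there exists a positive integer k* such that for all k ≥ k*, sup_{θ∈[0,2π]} ‖Δ_θ^k‖ < 1, where ‖·‖ is the operator (spectral) norm. -/
open Matrix Complex

/-!
By Gelfand's formula, at each θ some two consecutive powers satisfy `‖Δ_θ ^ j‖ < c ^ j`
(`j = m, m + 1`) for a fixed `c` between the spectral radius bound and `1`. These finitely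
many strict inequalities persist on a neighbourhood of θ, and since every `k ≥ (m - 1) m` is a
nonnegative combination of `m` and `m + 1`, submultiplicativity gives `‖Δ_φ ^ k‖ ≤ c ^ k` for
all such `k` and all φ near θ. Compactness of `[0, 2π]` makes the threshold uniform.
-/

open Filter Topology

theorem Nat.exists_mul_add_succ_mul_eq {m k : ℕ} (hk : (m - 1) * m ≤ k) :
    ∃ a b, m * a + (m + 1) * b = k := by
  rcases Nat.eq_zero_or_pos m with rfl | hm
  · exact ⟨0, k, by simp⟩
  have hmod : k % m ≤ k / m :=
    (Nat.le_sub_one_of_lt (Nat.mod_lt k hm)).trans ((Nat.le_div_iff_mul_le hm).2 hk)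
  obtain ⟨a, ha⟩ := Nat.exists_eq_add_of_le hmod
  refine ⟨a, k % m, ?_⟩
  have := Nat.div_add_mod k m
  rw [ha] at this
  linarith

section NormedRing

variable {A : Type*} [NormedRing A] [NormOneClass A]

theorem norm_pow_le_pow_of_norm_pow_le_of_norm_pow_succ_le {x : A} {c : ℝ} {m : ℕ}
    (hm : ‖x ^ m‖ ≤ c ^ m) (hm' : ‖x ^ (m + 1)‖ ≤ c ^ (m + 1)) {k : ℕ} (hk : (m - 1) * m ≤ k) :
    ‖x ^ k‖ ≤ c ^ k := by
  obtain ⟨a, b, rfl⟩ := Nat.exists_mul_add_succ_mul_eq hk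
  have ha : ‖(x ^ m) ^ a‖ ≤ (c ^ m) ^ a :=
    (norm_pow_le _ a).trans (pow_le_pow_left₀ (norm_nonneg _) hm a)
  have hb : ‖(x ^ (m + 1)) ^ b‖ ≤ (c ^ (m + 1)) ^ b :=
    (norm_pow_le _ b).trans (pow_le_pow_left₀ (norm_nonneg _) hm' b)
  rw [pow_add, pow_mul, pow_mul, pow_add c, pow_mul, pow_mul]
  exact (norm_mul_le _ _).trans
    (mul_le_mul ha hb (norm_nonneg _) ((norm_nonneg _).trans ha))

end NormedRing

section BanachAlgebra

variable {A : Type*} [NormedRing A] [NormedAlgebra ℂ A] [CompleteSpace A]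

theorem eventually_norm_pow_lt_pow_of_spectralRadius_lt (a : A) {c : ℝ}
    (h : spectralRadius ℂ a < ENNReal.ofReal c) : ∀ᶠ k in atTop, ‖a ^ k‖ < c ^ k := by
  have hc : 0 < c := ENNReal.ofReal_pos.1 (pos_of_gt h)
  have hGelfand := spectrum.pow_norm_pow_one_div_tendsto_nhds_spectralRadius a
  filter_upwards [hGelfand.eventually_lt_const h, eventually_ne_atTop 0] with k hk hk0
  have hk' := (ENNReal.ofReal_lt_ofReal_iff hc).1 hk
  rw [one_div] at hk'
  calc ‖a ^ k‖ = (‖a ^ k‖ ^ (k⁻¹ : ℝ)) ^ k :=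
        (Real.rpow_inv_natCast_pow (norm_nonneg _) hk0).symm
    _ < c ^ k := pow_lt_pow_left₀ hk' (by positivity) hk0

variable [NormOneClass A] {X : Type*} [TopologicalSpace X] {g : X → A} {c : ℝ}

theorem ContinuousAt.eventually_norm_pow_le_pow {x₀ : X} (hg : ContinuousAt g x₀)
    (h : spectralRadius ℂ (g x₀) < ENNReal.ofReal c) :
    ∀ᶠ p in atTop ×ˢ 𝓝 x₀, ‖g p.2 ^ p.1‖ ≤ c ^ p.1 := by
  have hG := eventually_norm_pow_lt_pow_of_spectralRadius_lt (g x₀) h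
  obtain ⟨m, hm, hm'⟩ := (hG.and ((tendsto_add_atTop_nat 1).eventually hG)).exists
  have hcont : ∀ j, ContinuousAt (fun x => ‖g x ^ j‖) x₀ := fun j => (hg.pow j).norm
  filter_upwards [(eventually_ge_atTop ((m - 1) * m)).prod_mk
    (((hcont m).eventually_lt continuousAt_const hm).and
      ((hcont (m + 1)).eventually_lt continuousAt_const hm'))] with p ⟨hk, hx, hx'⟩
  exact norm_pow_le_pow_of_norm_pow_le_of_norm_pow_succ_le hx.le hx'.le hk

theorem IsCompact.eventually_forall_norm_pow_le_pow {K : Set X} (hK : IsCompact K)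
    (hg : Continuous g) (h : ∀ x ∈ K, spectralRadius ℂ (g x) < ENNReal.ofReal c) :
    ∀ᶠ k in atTop, ∀ x ∈ K, ‖g x ^ k‖ ≤ c ^ k := by
  have hprod : ∀ᶠ p in atTop ×ˢ 𝓝ˢ K, ‖g p.2 ^ p.1‖ ≤ c ^ p.1 :=
    hK.mem_prod_nhdsSet_of_forall fun x hx => hg.continuousAt.eventually_norm_pow_le_pow (h x hx)
  exact hprod.curry.mono fun _ hk => hk.self_of_nhdsSet

end BanachAlgebra

theorem stmt1 {n : ℕ} (A B : Matrix (Fin n) (Fin n) ℂ)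
    (h : ∃ r : ℝ, r < 1 ∧ ∀ θ ∈ Set.Icc (0 : ℝ) (2 * Real.pi),
      ∀ μ ∈ spectrum ℂ (A + Complex.exp (-(θ : ℂ) * Complex.I) • B), ‖μ‖ ≤ r) :
    ∃ kstar : ℕ, 1 ≤ kstar ∧ ∀ k ≥ kstar, ∃ s : ℝ, s < 1 ∧
      ∀ θ ∈ Set.Icc (0 : ℝ) (2 * Real.pi),
        ‖Matrix.toEuclideanCLM (𝕜 := ℂ)
          ((A + Complex.exp (-(θ : ℂ) * Complex.I) • B) ^ k)‖ ≤ s := by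
  obtain ⟨r, hr1, hr⟩ := h
  obtain ⟨c, hrc, hc1⟩ := exists_between (max_lt hr1 one_pos)
  have hc : 0 < c := (le_max_right r 0).trans_lt hrc
  -- For `n = 0` the identity operator has norm `0`, so `NormOneClass` is unavailable.
  rcases subsingleton_or_nontrivial (EuclideanSpace ℂ (Fin n)) with hE | hE
  · exact ⟨1, le_rfl, fun k _ => ⟨0, one_pos, fun θ _ => (norm_of_subsingleton _).le⟩⟩
  set g : ℝ → EuclideanSpace ℂ (Fin n) →L[ℂ] EuclideanSpace ℂ (Fin n) :=
    fun θ => Matrix.toEuclideanCLM (𝕜 := ℂ) (A + Complex.exp (-(θ : ℂ) * Complex.I) • B)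
  have hg : Continuous g := by
    have hL := (Matrix.toEuclideanCLM (𝕜 := ℂ) (n := Fin n)).toAlgEquiv.toLinearMap
      |>.continuous_of_finiteDimensional
    exact hL.comp (by fun_prop)
  have hρ : ∀ θ ∈ Set.Icc (0 : ℝ) (2 * Real.pi),
      spectralRadius ℂ (g θ) < ENNReal.ofReal c := by
    intro θ hθ
    refine spectrum.spectralRadius_lt_of_forall_lt (g θ) (r := c.toNNReal) fun μ hμ => ?_
    rw [AlgEquiv.spectrum_eq] at hμ
    rw [Real.lt_toNNReal_iff_coe_lt, coe_nnnorm]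
    exact (hr θ hθ μ hμ).trans_lt ((le_max_left r 0).trans_lt hrc)
  obtain ⟨N, hN⟩ := (isCompact_Icc.eventually_forall_norm_pow_le_pow hg hρ).exists_forall_of_atTop
  refine ⟨N + 1, N.succ_pos, fun k hk => ⟨c, hc1, fun θ hθ => ?_⟩⟩
  rw [map_pow]
  exact (hN k (by omega) θ hθ).trans (pow_le_of_le_one hc.le hc1.le (by omega))
end

section
/- Let A, B ∈ ℝ^{n×n} be matrices and let x : ℝ → ℝ^n satisfy x(t) = A·x(t−a) + B·x(t−b) for all t (where a, b > 0 are fixed reals). Then for every integer k ≥ 1 and all t, x(t) = Σ_{i=0}^{k} A^{[i]}B^{[k−i]} · x(t − i a − (k−i) b), where A^{[i]}B^{[j]} denotes the shuffle product sum of all words in A and B containing exactly i copies of A and j copies of B. -/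
open Matrix Finset

/-- The shuffle power `A^{[i]}B^{[j]}`: the sum of all words in the letters A, B
containing exactly i occurrences of A and j occurrences of B. -/
def shufflePow {n : ℕ} {R : Type*} [Semiring R] (A B : Matrix (Fin n) (Fin n) R) :
    ℕ → ℕ → Matrix (Fin n) (Fin n) R
  | 0, 0 => 1
  | i + 1, 0 => A * shufflePow A B i 0
  | 0, j + 1 => B * shufflePow A B 0 j
  | i + 1, j + 1 => A * shufflePow A B i (j + 1) + B * shufflePow A B (i + 1) j

/- STATEMENT 6: If x(t) = A x(t−a) + B x(t−b) for all t, then for every k ≥ 1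
and all t, x(t) = Σ_{i=0}^{k} A^{[i]}B^{[k−i]} x(t − i a − (k−i) b). -/
theorem stmt6 {n : ℕ} (A B : Matrix (Fin n) (Fin n) ℝ) (a b : ℝ)
    (ha : 0 < a) (hb : 0 < b) (x : ℝ → Fin n → ℝ)
    (hx : ∀ t : ℝ, x t = A.mulVec (x (t - a)) + B.mulVec (x (t - b))) :
    ∀ k : ℕ, 1 ≤ k → ∀ t : ℝ,
      x t = ∑ i ∈ Finset.range (k + 1),
        (shufflePow A B i (k - i)).mulVec (x (t - i * a - (k - i : ℕ) * b)) := by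
  intro k hk
  induction k, hk using Nat.le_induction with
  | base =>
    intro t
    rw [hx t]
    rw [Finset.sum_range_succ, Finset.sum_range_succ, Finset.sum_range_zero]
    simp [shufflePow, Matrix.mul_one]
    abel
  | succ k hk ih =>
    intro t
    rw [hx t, ih (t - a), ih (t - b)]
    have hM : ∀ (M : Matrix (Fin n) (Fin n) ℝ) (s : Finset ℕ) (f : ℕ → Fin n → ℝ),
        M.mulVec (∑ i ∈ s, f i) = ∑ i ∈ s, M.mulVec (f i) := by
      intro M s f
      exact map_sum M.mulVecLin f s
    rw [hM A, hM B]
    simp only [Matrix.mulVec_mulVec]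
    have hmid : ∀ i ∈ Finset.range k,
        (shufflePow A B (i + 1) (k + 1 - (i + 1))).mulVec
            (x (t - (i + 1 : ℕ) * a - (k + 1 - (i + 1) : ℕ) * b))
        = (A * shufflePow A B i (k - i)).mulVec (x (t - a - i * a - (k - i : ℕ) * b))
          + (B * shufflePow A B (i + 1) (k - (i + 1))).mulVec
              (x (t - b - (i + 1 : ℕ) * a - (k - (i + 1) : ℕ) * b)) := by
      intro i hi
      rw [Finset.mem_range] at hi
      have h1 : k + 1 - (i + 1) = (k - i - 1) + 1 := by omega
      have h2 : k - i = (k - i - 1) + 1 := by omega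
      rw [h1, shufflePow, Matrix.add_mulVec, ← h2,
        show k - i - 1 = k - (i + 1) from by omega]
      congr 2
      · congr 1
        push_cast
        ring
      · congr 1
        rw [show ((k - i : ℕ) : ℝ) = (k : ℝ) - i from Nat.cast_sub hi.le,
          show ((k - (i + 1) : ℕ) : ℝ) = (k : ℝ) - i - 1 from by
            rw [Nat.cast_sub (by omega)]; push_cast; ring]
        push_cast
        ring
    have hlast :
        (shufflePow A B (k + 1) (k + 1 - (k + 1))).mulVec
            (x (t - (k + 1 : ℕ) * a - (k + 1 - (k + 1) : ℕ) * b))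
        = (A * shufflePow A B k (k - k)).mulVec (x (t - a - k * a - (k - k : ℕ) * b)) := by
      rw [show k + 1 - (k + 1) = 0 from by omega, Nat.sub_self, shufflePow]
      congr 2
      push_cast
      ring
    have hfirst :
        (shufflePow A B 0 (k + 1 - 0)).mulVec (x (t - (0 : ℕ) * a - (k + 1 - 0 : ℕ) * b))
        = (B * shufflePow A B 0 (k - 0)).mulVec (x (t - b - (0 : ℕ) * a - (k - 0 : ℕ) * b)) := by
      rw [Nat.sub_zero, Nat.sub_zero, shufflePow]
      congr 2
      push_cast
      ring
    conv_rhs =>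
      rw [Finset.sum_range_succ', Finset.sum_range_succ,
        Finset.sum_congr rfl hmid, hlast, hfirst, Finset.sum_add_distrib]
    conv_lhs =>
      rw [Finset.sum_range_succ, Finset.sum_range_succ']
    abel
end

section
/- Let A, B ∈ ℂ^{n×n}, Δ_θ = A + B e^{−iθ}, and suppose there exist Hermitian positive definite matrices P, Q ∈ ℂ^{kn×kn} and, for the specific block matrices A_k, B_k, 𝒜_k, ℬ_k, L_k defined below, the matrix Ω_k(P,Q) = [A_k B_k]ᵀ(P−Q)[A_k B_k] − L_kᵀ P L_k + [𝒜_k ℬ_k]ᵀ Q [𝒜_k ℬ_k] is negative definite. Then ρ(Δ_θ) < 1 for all θ ∈ [0, 2π]. -/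
open Matrix Complex ComplexOrder

/-!
Let `μ` be an eigenvalue of `Δ_θ` with eigenvector `v` and evaluate the quadratic form of `Ω_k` at
`u = [z_k ⊗ v; v]`. The three block matrices send `u` to `e^{iθ} (z_k ⊗ v)`,
`e^{iθ} μ (z_k ⊗ v)` and `z_k ⊗ v`, so the `P`-terms cancel because `|e^{iθ}| = 1`, leaving
`uᴴ Ω_k u = (|μ|² - 1) (z_k ⊗ v)ᴴ Q (z_k ⊗ v)`. The left side is negative and the right factor
is nonnegative, hence `|μ| < 1`.
-/

/-- The block upper shift matrix A_k: I_n on the block superdiagonal, zeros elsewhere. -/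
def blockShift (k n : ℕ) : Matrix (Fin k × Fin n) (Fin k × Fin n) ℂ :=
  Matrix.of fun r c => if (c.1 : ℕ) = (r.1 : ℕ) + 1 ∧ c.2 = r.2 then 1 else 0

/-- The block column B_k with I_n in the bottom block and zeros elsewhere. -/
def blockBottom (k n : ℕ) : Matrix (Fin k × Fin n) (Fin n) ℂ :=
  Matrix.of fun r c => if (r.1 : ℕ) = k - 1 ∧ r.2 = c then 1 else 0

/-- The block upper bidiagonal matrix 𝒜_k with B on the diagonal blocks and A on
the superdiagonal blocks. -/
def scriptA {n : ℕ} (k : ℕ) (A B : Matrix (Fin n) (Fin n) ℂ) :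
    Matrix (Fin k × Fin n) (Fin k × Fin n) ℂ :=
  Matrix.of fun r c =>
    if (c.1 : ℕ) = (r.1 : ℕ) then B r.2 c.2
    else if (c.1 : ℕ) = (r.1 : ℕ) + 1 then A r.2 c.2 else 0

/-- The block column ℬ_k with A in the bottom block and zeros elsewhere. -/
def scriptB {n : ℕ} (k : ℕ) (A : Matrix (Fin n) (Fin n) ℂ) :
    Matrix (Fin k × Fin n) (Fin n) ℂ :=
  Matrix.of fun r c => if (r.1 : ℕ) = k - 1 then A r.2 c else 0

/-- L_k = [I_{kn}  0]. -/
def Lmat (k n : ℕ) : Matrix (Fin k × Fin n) ((Fin k × Fin n) ⊕ Fin n) ℂ :=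
  Matrix.fromCols 1 0

/-- The matrix Ω_k(P,Q) = [A_k B_k]ᴴ(P−Q)[A_k B_k] − L_kᴴ P L_k + [𝒜_k ℬ_k]ᴴ Q [𝒜_k ℬ_k]. -/
noncomputable def Omega {n : ℕ} (k : ℕ) (A B : Matrix (Fin n) (Fin n) ℂ)
    (P Q : Matrix (Fin k × Fin n) (Fin k × Fin n) ℂ) :
    Matrix ((Fin k × Fin n) ⊕ Fin n) ((Fin k × Fin n) ⊕ Fin n) ℂ :=
  (Matrix.fromCols (blockShift k n) (blockBottom k n))ᴴ * (P - Q) *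
      Matrix.fromCols (blockShift k n) (blockBottom k n)
    - (Lmat k n)ᴴ * P * Lmat k n
    + (Matrix.fromCols (scriptA k A B) (scriptB k A))ᴴ * Q *
      Matrix.fromCols (scriptA k A B) (scriptB k A)

section QuadraticForm

variable {R m p : Type*} [CommRing R] [StarRing R] [Fintype m] [Fintype p]

lemma star_dotProduct_conjTranspose_mul_mul_mulVec (S : Matrix m m R) (M : Matrix m p R)
    (x : p → R) : star x ⬝ᵥ ((Mᴴ * S * M) *ᵥ x) = star (M *ᵥ x) ⬝ᵥ (S *ᵥ (M *ᵥ x)) := by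
  rw [star_mulVec, ← dotProduct_mulVec, mulVec_mulVec, mulVec_mulVec]

lemma star_dotProduct_steinForm_mulVec {G H L : Matrix m p R} {P Q : Matrix m m R}
    {u : p → R} {w : m → R} {e μ : R} (he : star e * e = 1) (hG : G *ᵥ u = e • w)
    (hH : H *ᵥ u = (e * μ) • w) (hL : L *ᵥ u = w) :
    star u ⬝ᵥ ((Gᴴ * (P - Q) * G - Lᴴ * P * L + Hᴴ * Q * H) *ᵥ u) =
      (star μ * μ - 1) * (star w ⬝ᵥ (Q *ᵥ w)) := by
  rw [add_mulVec, sub_mulVec, dotProduct_add, dotProduct_sub,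
    star_dotProduct_conjTranspose_mul_mul_mulVec, star_dotProduct_conjTranspose_mul_mul_mulVec,
    star_dotProduct_conjTranspose_mul_mul_mulVec, hG, hH, hL]
  simp only [mulVec_smul, star_smul, smul_dotProduct, dotProduct_smul, smul_eq_mul,
    sub_mulVec, dotProduct_sub, star_mul']
  linear_combination (star w ⬝ᵥ (P *ᵥ w) - star w ⬝ᵥ (Q *ᵥ w)
    + star μ * μ * (star w ⬝ᵥ (Q *ᵥ w))) * he

end QuadraticForm

lemma Complex.norm_lt_one_of_mul_neg {μ q : ℂ} (hq : 0 ≤ q) (h : (star μ * μ - 1) * q < 0) :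
    ‖μ‖ < 1 := by
  by_contra! hμ
  have hμ' : (0 : ℂ) ≤ star μ * μ - 1 := by
    rw [star_def, conj_mul', sub_nonneg]
    exact_mod_cast one_le_pow₀ hμ
  exact (mul_nonneg hμ' hq).not_gt h

lemma pow_sub_eq_mul_pow_sub_succ {M : Type*} [Monoid M] (c : M) {j k : ℕ} (h : j < k) :
    c ^ (k - j) = c * c ^ (k - (j + 1)) := by
  rw [← pow_succ', show k - (j + 1) + 1 = k - j by omega]

section BlockEntries

variable {k n : ℕ}

lemma blockShift_mulVec_apply (x : Fin k × Fin n → ℂ) (j : Fin k) (i : Fin n) :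
    (blockShift k n *ᵥ x) (j, i) = if h : (j : ℕ) + 1 < k then x (⟨j + 1, h⟩, i) else 0 := by
  split_ifs with h
  · rw [mulVec, dotProduct, Fintype.sum_eq_single (⟨j + 1, h⟩, i)]
    · simp [blockShift]
    · rintro ⟨j', i'⟩ hne
      simp only [blockShift, of_apply, ite_mul, one_mul, zero_mul]
      exact if_neg fun h' => hne (Prod.ext (Fin.ext h'.1) h'.2)
  · refine Finset.sum_eq_zero fun p _ => ?_
    simp only [blockShift, of_apply, ite_mul, one_mul, zero_mul]
    exact if_neg fun ⟨h', _⟩ => h (h' ▸ p.1.isLt)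

lemma blockBottom_mulVec_apply (v : Fin n → ℂ) (j : Fin k) (i : Fin n) :
    (blockBottom k n *ᵥ v) (j, i) = if (j : ℕ) = k - 1 then v i else 0 := by
  split_ifs with h <;> simp [mulVec, dotProduct, blockBottom, h]

lemma scriptA_mulVec_apply (A B : Matrix (Fin n) (Fin n) ℂ) (x : Fin k × Fin n → ℂ)
    (j : Fin k) (i : Fin n) :
    (scriptA k A B *ᵥ x) (j, i) = (B *ᵥ fun i' => x (j, i')) i +
      if h : (j : ℕ) + 1 < k then (A *ᵥ fun i' => x (⟨j + 1, h⟩, i')) i else 0 := by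
  rw [mulVec, dotProduct, Fintype.sum_prod_type]
  split_ifs with h
  · rw [Fintype.sum_eq_add j ⟨j + 1, h⟩ (fun h' => by simpa using congrArg Fin.val h')]
    · simp [scriptA, mulVec, dotProduct]
    · rintro j' ⟨h1, h2⟩
      have h1 : (j' : ℕ) ≠ j := fun h' => h1 (Fin.ext h')
      have h2 : (j' : ℕ) ≠ j + 1 := fun h' => h2 (Fin.ext h')
      simp [scriptA, h1, h2]
  · rw [Fintype.sum_eq_single j, add_zero]
    · simp [scriptA, mulVec, dotProduct]
    · intro j' hj'
      have h1 : (j' : ℕ) ≠ j := fun h' => hj' (Fin.ext h')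
      have h2 : (j' : ℕ) ≠ j + 1 := by omega
      simp [scriptA, h1, h2]

lemma scriptB_mulVec_apply (A : Matrix (Fin n) (Fin n) ℂ) (v : Fin n → ℂ) (j : Fin k)
    (i : Fin n) : (scriptB k A *ᵥ v) (j, i) = if (j : ℕ) = k - 1 then (A *ᵥ v) i else 0 := by
  split_ifs with h <;> simp [mulVec, dotProduct, scriptB, h]

lemma Lmat_mulVec_sumElim (x : Fin k × Fin n → ℂ) (y : Fin n → ℂ) :
    Lmat k n *ᵥ Sum.elim x y = x := by
  rw [Lmat, fromCols_mulVec_sumElim, one_mulVec, zero_mulVec, add_zero]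

end BlockEntries

/-- The paper's test vector `z_k` applied to `v`: with `c = e^{-iθ}` its blocks are
`e^{-ijθ} v` for `j = k, …, 1`. -/
def phaseBlockVec {n : ℕ} (k : ℕ) (c : ℂ) (v : Fin n → ℂ) : Fin k × Fin n → ℂ :=
  fun p => c ^ (k - (p.1 : ℕ)) * v p.2

section PhaseBlockVec

variable {k n : ℕ} {c e : ℂ}

lemma fromCols_blockShift_mulVec_phaseBlockVec (hce : c * e = 1) (v : Fin n → ℂ) :
    fromCols (blockShift k n) (blockBottom k n) *ᵥ Sum.elim (phaseBlockVec k c v) v =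
      e • phaseBlockVec k c v := by
  ext ⟨j, i⟩
  rw [fromCols_mulVec_sumElim, Pi.add_apply, blockShift_mulVec_apply, blockBottom_mulVec_apply,
    Pi.smul_apply, smul_eq_mul]
  split_ifs with h h'
  · omega
  · simp only [phaseBlockVec]
    rw [pow_sub_eq_mul_pow_sub_succ c (Nat.lt_of_succ_lt h)]
    linear_combination (-(c ^ (k - (j + 1))) * v i) * hce
  · rw [phaseBlockVec, show k - (j : ℕ) = 1 by omega]
    linear_combination (-v i) * hce
  · omega

lemma fromCols_scriptA_mulVec_phaseBlockVec (hce : c * e = 1) {A B : Matrix (Fin n) (Fin n) ℂ}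
    {μ : ℂ} {v : Fin n → ℂ} (hv : (A + c • B) *ᵥ v = μ • v) :
    fromCols (scriptA k A B) (scriptB k A) *ᵥ Sum.elim (phaseBlockVec k c v) v =
      (e * μ) • phaseBlockVec k c v := by
  have hvi (i : Fin n) : (A *ᵥ v) i + c * (B *ᵥ v) i = μ * v i := by
    simpa [add_mulVec, smul_mulVec] using congrFun hv i
  ext ⟨j, i⟩
  rw [fromCols_mulVec_sumElim, Pi.add_apply, scriptA_mulVec_apply, scriptB_mulVec_apply,
    Pi.smul_apply, smul_eq_mul]
  have hblock (j : Fin k) : (fun i' => phaseBlockVec k c v (j, i')) = c ^ (k - (j : ℕ)) • v :=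
    rfl
  split_ifs with h h'
  · omega
  · rw [hblock, hblock, mulVec_smul, mulVec_smul]
    simp only [Pi.smul_apply, smul_eq_mul, phaseBlockVec]
    rw [pow_sub_eq_mul_pow_sub_succ c (Nat.lt_of_succ_lt h)]
    linear_combination c ^ (k - (j + 1)) * hvi i - (c ^ (k - (j + 1)) * μ * v i) * hce
  · rw [hblock, mulVec_smul]
    simp only [Pi.smul_apply, smul_eq_mul, phaseBlockVec]
    rw [show k - (j : ℕ) = 1 by omega]
    linear_combination hvi i - μ * v i * hce
  · omega

end PhaseBlockVec

theorem norm_lt_one_of_mem_spectrum_add_smul {n k : ℕ} {A B : Matrix (Fin n) (Fin n) ℂ}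
    {P Q : Matrix (Fin k × Fin n) (Fin k × Fin n) ℂ} (hQ : Q.PosSemidef)
    (hΩ : (-(Omega k A B P Q)).PosDef) {e μ : ℂ} (he : star e * e = 1)
    (hμ : μ ∈ spectrum ℂ (A + star e • B)) : ‖μ‖ < 1 := by
  rw [← spectrum_toLin', ← Module.End.hasEigenvalue_iff_mem_spectrum] at hμ
  obtain ⟨v, hv⟩ := hμ.exists_hasEigenvector
  have hv' : (A + star e • B) *ᵥ v = μ • v := by rw [← toLin'_apply]; exact hv.apply_eq_smul
  set u := Sum.elim (phaseBlockVec k (star e) v) v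
  have hu : u ≠ 0 := fun h => hv.2 (funext fun i => congrFun h (Sum.inr i))
  have hform := star_dotProduct_steinForm_mulVec (P := P) (Q := Q) he
    (fromCols_blockShift_mulVec_phaseBlockVec he v)
    (fromCols_scriptA_mulVec_phaseBlockVec he hv') (Lmat_mulVec_sumElim _ v)
  have hneg : star u ⬝ᵥ (Omega k A B P Q *ᵥ u) < 0 := by
    simpa [neg_mulVec] using hΩ.dotProduct_mulVec_pos hu
  exact Complex.norm_lt_one_of_mul_neg (hQ.dotProduct_mulVec_nonneg _) (hform ▸ hneg)

theorem stmt9_general {n : ℕ} (k : ℕ) (A B : Matrix (Fin n) (Fin n) ℂ)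
    (P Q : Matrix (Fin k × Fin n) (Fin k × Fin n) ℂ)
    (hQ : Q.PosDef) (hΩ : (-(Omega k A B P Q)).PosDef) :
    ∀ θ ∈ Set.Icc (0 : ℝ) (2 * Real.pi),
      ∀ μ ∈ spectrum ℂ (A + Complex.exp (-(θ : ℂ) * Complex.I) • B), ‖μ‖ < 1 := by
  intro θ _ μ hμ
  have hstar : star (exp (θ * I)) = exp (-(θ : ℂ) * I) := by
    rw [star_def, ← exp_conj, map_mul, conj_ofReal, conj_I, mul_neg, neg_mul]
  refine norm_lt_one_of_mem_spectrum_add_smul hQ.posSemidef hΩ ?_ (hstar ▸ hμ)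
  rw [hstar, ← exp_add, neg_mul, neg_add_cancel, exp_zero]

theorem stmt9 {n : ℕ} (k : ℕ) (hk : 1 ≤ k) (A B : Matrix (Fin n) (Fin n) ℂ)
    (P Q : Matrix (Fin k × Fin n) (Fin k × Fin n) ℂ)
    (hP : P.PosDef) (hQ : Q.PosDef) (hΩ : (-(Omega k A B P Q)).PosDef) :
    ∀ θ ∈ Set.Icc (0 : ℝ) (2 * Real.pi),
      ∀ μ ∈ spectrum ℂ (A + Complex.exp (-(θ : ℂ) * Complex.I) • B), ‖μ‖ < 1 :=
  stmt9_general k A B P Q hQ hΩ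
end

section
/- Let A, B ∈ ℂ^{n×n}, Δ_θ = A + B e^{−iθ}. Define C_k = [B^{[k]}, B^{[k−1]}A^{[1]}, …, B^{[1]}A^{[k−1]}] ∈ ℂ^{n×kn} and D_k = A^{[k]} ∈ ℂ^{n×n} using shuffle powers. Then for the kn×kn matrices W_k, 𝒜_k, A_k, B_k, ℬ_k (as defined in the context): 𝒜_kᵀ W_kᵀ W_k 𝒜_k − A_kᵀ W_kᵀ W_k A_k = C_kᵀ C_k, 𝒜_kᵀ W_kᵀ W_k ℬ_k − A_kᵀ W_kᵀ W_k B_k = C_kᵀ D_k, and ℬ_kᵀ W_kᵀ W_k ℬ_k − B_kᵀ W_kᵀ W_k B_k = D_kᵀ D_k − I_n. -/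
open Matrix Complex

/-- The block upper triangular matrix W_k whose (i,j)-block (0-indexed, i ≤ j)
is the shuffle power B^{[k−1−j]}A^{[j−i]}, with I_n in the bottom-right block. -/
def Wmat {n : ℕ} (k : ℕ) (A B : Matrix (Fin n) (Fin n) ℂ) :
    Matrix (Fin k × Fin n) (Fin k × Fin n) ℂ :=
  Matrix.of fun r c =>
    if (r.1 : ℕ) ≤ (c.1 : ℕ) then
      shufflePow A B ((c.1 : ℕ) - (r.1 : ℕ)) (k - 1 - (c.1 : ℕ)) r.2 c.2
    else 0

/-- C_k = [B^{[k]}, B^{[k−1]}A^{[1]}, …, B^{[1]}A^{[k−1]}]. -/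
def Cmat {n : ℕ} (k : ℕ) (A B : Matrix (Fin n) (Fin n) ℂ) :
    Matrix (Fin n) (Fin k × Fin n) ℂ :=
  Matrix.of fun p c => shufflePow A B (c.1 : ℕ) (k - (c.1 : ℕ)) p c.2

section sp
variable {n : ℕ} {R : Type*} [Semiring R] (A B : Matrix (Fin n) (Fin n) R)

lemma sp_zz : shufflePow A B 0 0 = 1 := by rw [shufflePow]
lemma sp_s0 (i : ℕ) : shufflePow A B (i+1) 0 = A * shufflePow A B i 0 := by rw [shufflePow]
lemma sp_0s (j : ℕ) : shufflePow A B 0 (j+1) = B * shufflePow A B 0 j := by rw [shufflePow]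
lemma sp_ss (i j : ℕ) : shufflePow A B (i+1) (j+1)
    = A * shufflePow A B i (j+1) + B * shufflePow A B (i+1) j := by rw [shufflePow]

lemma sp_succ_zero (i : ℕ) : shufflePow A B (i+1) 0 = shufflePow A B i 0 * A := by
  induction i with
  | zero => rw [sp_s0, sp_zz, mul_one, one_mul]
  | succ i ih =>
    conv_lhs => rw [sp_s0 A B (i+1), ih]
    conv_rhs => rw [sp_s0 A B i]
    rw [mul_assoc]

lemma sp_zero_succ (j : ℕ) : shufflePow A B 0 (j+1) = shufflePow A B 0 j * B := by
  induction j with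
  | zero => rw [sp_0s, sp_zz, mul_one, one_mul]
  | succ j ih =>
    conv_lhs => rw [sp_0s A B (j+1), ih]
    conv_rhs => rw [sp_0s A B j]
    rw [mul_assoc]

lemma sp_succ_succ (i j : ℕ) : shufflePow A B (i+1) (j+1)
    = shufflePow A B i (j+1) * A + shufflePow A B (i+1) j * B := by
  induction i generalizing j with
  | zero =>
    induction j with
    | zero =>
      rw [sp_ss A B 0 0, sp_0s A B 0, sp_s0 A B 0, sp_zz]
      simp only [mul_one]
      exact add_comm _ _
    | succ j ihj =>
      conv_lhs => rw [sp_ss A B 0 (j+1), sp_zero_succ A B (j+1), ihj]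
      conv_rhs => rw [sp_0s A B (j+1), sp_ss A B 0 j]
      noncomm_ring
  | succ i ihi =>
    induction j with
    | zero =>
      conv_lhs => rw [sp_ss A B (i+1) 0, sp_succ_zero A B (i+1), ihi 0]
      conv_rhs => rw [sp_ss A B i 0, sp_s0 A B (i+1)]
      noncomm_ring
    | succ j ihj =>
      conv_lhs => rw [sp_ss A B (i+1) (j+1), ihi (j+1), ihj]
      conv_rhs => rw [sp_ss A B i (j+1), sp_ss A B (i+1) j]
      noncomm_ring
end sp

section bLiftsec
variable {n : ℕ} (k : ℕ)

def bLift (f : Fin k → Fin k → Matrix (Fin n) (Fin n) ℂ) :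
    Matrix (Fin k × Fin n) (Fin k × Fin n) ℂ :=
  Matrix.of fun r c => f r.1 c.1 r.2 c.2

def bLiftC (g : Fin k → Matrix (Fin n) (Fin n) ℂ) :
    Matrix (Fin k × Fin n) (Fin n) ℂ :=
  Matrix.of fun r c => g r.1 r.2 c

def bLiftR (g : Fin k → Matrix (Fin n) (Fin n) ℂ) :
    Matrix (Fin n) (Fin k × Fin n) ℂ :=
  Matrix.of fun r c => g c.1 r c.2

variable (f f' : Fin k → Fin k → Matrix (Fin n) (Fin n) ℂ)
variable (g h : Fin k → Matrix (Fin n) (Fin n) ℂ)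

lemma bLift_mul : bLift k f * bLift k f' = bLift k (fun i j => ∑ l, f i l * f' l j) := by
  ext ⟨i, p⟩ ⟨j, q⟩
  simp [bLift, Matrix.mul_apply, Fintype.sum_prod_type, Matrix.sum_apply]

lemma bLift_mul_liftC : bLift k f * bLiftC k g = bLiftC k (fun i => ∑ l, f i l * g l) := by
  ext ⟨i, p⟩ q
  simp [bLift, bLiftC, Matrix.mul_apply, Fintype.sum_prod_type, Matrix.sum_apply]

lemma bLiftR_mul_liftC : bLiftR k g * bLiftC k h = ∑ l, g l * h l := by
  ext p q
  simp [bLiftR, bLiftC, Matrix.mul_apply, Fintype.sum_prod_type, Matrix.sum_apply]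

lemma bLiftC_mul_liftR : bLiftC k g * bLiftR k h = bLift k (fun i j => g i * h j) := by
  ext ⟨i, p⟩ ⟨j, q⟩
  simp [bLift, bLiftC, bLiftR, Matrix.mul_apply]

lemma bLiftC_mul_mat (X : Matrix (Fin n) (Fin n) ℂ) :
    bLiftC k g * X = bLiftC k (fun i => g i * X) := by
  ext ⟨i, p⟩ q
  simp [bLiftC, Matrix.mul_apply]

lemma bLift_transpose : (bLift k f)ᵀ = bLift k (fun i j => (f j i)ᵀ) := rfl

lemma bLiftC_transpose : (bLiftC k g)ᵀ = bLiftR k (fun i => (g i)ᵀ) := rfl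

lemma bLiftR_transpose : (bLiftR k g)ᵀ = bLiftC k (fun i => (g i)ᵀ) := rfl

lemma bLift_sub : bLift k f - bLift k f' = bLift k (fun i j => f i j - f' i j) := rfl

lemma bLiftC_sub : bLiftC k g - bLiftC k h = bLiftC k (fun i => g i - h i) := rfl

lemma bLift_congr (hf : ∀ i j, f i j = f' i j) : bLift k f = bLift k f' := by
  unfold bLift; congr 1; ext r c; rw [hf]

lemma bLiftC_congr (hg : ∀ i, g i = h i) : bLiftC k g = bLiftC k h := by
  unfold bLiftC; congr 1; ext r c; rw [hg]
end bLiftsec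

section eqs
variable {n : ℕ} (k : ℕ) (A B : Matrix (Fin n) (Fin n) ℂ)

lemma Wmat_eq : Wmat k A B = bLift k (fun i l =>
    if (i : ℕ) ≤ (l : ℕ) then shufflePow A B ((l : ℕ) - (i : ℕ)) (k - 1 - (l : ℕ)) else 0) := by
  ext ⟨i, p⟩ ⟨l, s⟩
  simp only [Wmat, bLift, Matrix.of_apply]
  split_ifs <;> simp

lemma scriptA_eq : scriptA k A B = bLift k (fun l j =>
    if (j : ℕ) = (l : ℕ) then B else if (j : ℕ) = (l : ℕ) + 1 then A else 0) := by
  ext ⟨l, s⟩ ⟨j, q⟩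
  simp only [scriptA, bLift, Matrix.of_apply]
  split_ifs <;> simp

lemma blockShift_eq : blockShift k n = bLift k (fun l j =>
    if (j : ℕ) = (l : ℕ) + 1 then 1 else 0) := by
  ext ⟨l, s⟩ ⟨j, q⟩
  simp only [blockShift, bLift, Matrix.of_apply]
  split_ifs with h1 h2 h2 <;>
    simp_all [Matrix.one_apply, eq_comm]

lemma scriptB_eq : scriptB k A = bLiftC k (fun l => if (l : ℕ) = k - 1 then A else 0) := by
  ext ⟨l, s⟩ q
  simp only [scriptB, bLiftC, Matrix.of_apply]
  split_ifs <;> simp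

lemma blockBottom_eq : blockBottom k n = bLiftC k (fun l => if (l : ℕ) = k - 1 then 1 else 0) := by
  ext ⟨l, s⟩ q
  simp only [blockBottom, bLiftC, Matrix.of_apply]
  split_ifs with h1 h2 h2 <;> simp_all [Matrix.one_apply, eq_comm]

lemma Cmat_eq : Cmat k A B = bLiftR k (fun j => shufflePow A B (j : ℕ) (k - (j : ℕ))) := rfl
end eqs

lemma sum_ite_val {M : Type*} [AddCommMonoid M] {k : ℕ} (t : ℕ) (v : Fin k → M) :
    (∑ l : Fin k, if (l : ℕ) = t then v l else 0) = if h : t < k then v ⟨t, h⟩ else 0 := by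
  split_ifs with h
  · rw [Finset.sum_eq_single (⟨t, h⟩ : Fin k)]
    · simp
    · intro l _ hl
      rw [if_neg]
      intro hc
      exact hl (Fin.ext hc)
    · simp
  · apply Finset.sum_eq_zero
    intro l _
    rw [if_neg]
    omega

lemma sum_ite_val' {M : Type*} [AddCommMonoid M] {k : ℕ} (t : ℕ) (v : Fin k → M) :
    (∑ l : Fin k, if t = (l : ℕ) + 1 then v l else 0)
      = if h : t - 1 < k ∧ 1 ≤ t then v ⟨t - 1, h.1⟩ else 0 := by
  split_ifs with h
  · rw [Finset.sum_eq_single (⟨t - 1, h.1⟩ : Fin k)]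
    · rw [if_pos (by simp; omega)]
    · intro l _ hl
      rw [if_neg]
      intro hc
      exact hl (Fin.ext (by simp; omega))
    · simp
  · apply Finset.sum_eq_zero
    intro l _
    rw [if_neg]
    omega

def Fn {n : ℕ} (k : ℕ) (A B : Matrix (Fin n) (Fin n) ℂ) (l j : ℕ) :
    Matrix (Fin n) (Fin n) ℂ :=
  if l ≤ j then shufflePow A B (j - l) (k - j) else 0

def Gn {n : ℕ} (k : ℕ) (A B : Matrix (Fin n) (Fin n) ℂ) (l : ℕ) :
    Matrix (Fin n) (Fin n) ℂ :=
  shufflePow A B (k - l) 0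

section Scomp
variable {n : ℕ} (k : ℕ) (A B : Matrix (Fin n) (Fin n) ℂ)

lemma S1 (i j : Fin k) :
    (∑ l : Fin k,
      (if (i : ℕ) ≤ (l : ℕ) then shufflePow A B ((l : ℕ) - (i : ℕ)) (k - 1 - (l : ℕ)) else 0) *
      (if (j : ℕ) = (l : ℕ) then B else if (j : ℕ) = (l : ℕ) + 1 then A else 0))
    = Fn k A B (i : ℕ) (j : ℕ) := by
  have hsum : ∀ l : Fin k,
      (if (i : ℕ) ≤ (l : ℕ) then shufflePow A B ((l : ℕ) - (i : ℕ)) (k - 1 - (l : ℕ)) else 0) *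
      (if (j : ℕ) = (l : ℕ) then B else if (j : ℕ) = (l : ℕ) + 1 then A else 0)
      = (if (l : ℕ) = (j : ℕ) then
          (if (i : ℕ) ≤ (l : ℕ) then shufflePow A B ((l : ℕ) - (i : ℕ)) (k - 1 - (l : ℕ)) else 0) * B else 0)
      + (if (j : ℕ) = (l : ℕ) + 1 then
          (if (i : ℕ) ≤ (l : ℕ) then shufflePow A B ((l : ℕ) - (i : ℕ)) (k - 1 - (l : ℕ)) else 0) * A else 0) := by
    intro l
    by_cases h1 : (j : ℕ) = (l : ℕ)
    · rw [if_pos h1, if_pos h1.symm,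
        if_neg (show ¬((j : ℕ) = (l : ℕ) + 1) by omega), add_zero]
    · rw [if_neg h1, if_neg (show ¬((l : ℕ) = (j : ℕ)) from fun hc => h1 hc.symm), zero_add]
      by_cases h2 : (j : ℕ) = (l : ℕ) + 1
      · rw [if_pos h2, if_pos h2]
      · rw [if_neg h2, if_neg h2, mul_zero]
  rw [Finset.sum_congr rfl (fun l _ => hsum l), Finset.sum_add_distrib,
    sum_ite_val (j : ℕ) _, sum_ite_val' (j : ℕ) _, dif_pos j.isLt]
  simp only [Fn, Fin.val_mk]
  by_cases hij : (i : ℕ) ≤ (j : ℕ)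
  · rw [if_pos hij, if_pos hij]
    rcases Nat.lt_or_ge (i : ℕ) (j : ℕ) with hlt | hge
    · rw [dif_pos (⟨by omega, by omega⟩ : (j : ℕ) - 1 < k ∧ 1 ≤ (j : ℕ)),
        if_pos (show (i : ℕ) ≤ (j : ℕ) - 1 by omega)]
      have a1 : (j : ℕ) - (i : ℕ) = (j : ℕ) - (i : ℕ) - 1 + 1 := by omega
      have a2 : k - (j : ℕ) = k - 1 - (j : ℕ) + 1 := by omega
      have a3 : (j : ℕ) - 1 - (i : ℕ) = (j : ℕ) - (i : ℕ) - 1 := by omega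
      have a4 : k - 1 - ((j : ℕ) - 1) = k - 1 - (j : ℕ) + 1 := by omega
      conv_rhs => rw [a1, a2, sp_succ_succ]
      conv_lhs => rw [a1, a3, a4]
      exact add_comm _ _
    · have hz : (if h : (j : ℕ) - 1 < k ∧ 1 ≤ (j : ℕ) then
          (if (i : ℕ) ≤ (j : ℕ) - 1 then
            shufflePow A B ((j : ℕ) - 1 - (i : ℕ)) (k - 1 - ((j : ℕ) - 1)) else 0) * A
          else 0) = 0 := by
        by_cases hj1 : 1 ≤ (j : ℕ)
        · rw [dif_pos ⟨by omega, hj1⟩, if_neg (show ¬((i : ℕ) ≤ (j : ℕ) - 1) by omega), zero_mul]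
        · rw [dif_neg (by omega)]
      rw [hz, add_zero]
      have a0 : (j : ℕ) - (i : ℕ) = 0 := by omega
      have a2 : k - (j : ℕ) = k - 1 - (j : ℕ) + 1 := by omega
      conv_rhs => rw [a0, a2, sp_zero_succ]
      conv_lhs => rw [a0]
  · rw [if_neg hij, if_neg hij, zero_mul, zero_add]
    have hz : (if h : (j : ℕ) - 1 < k ∧ 1 ≤ (j : ℕ) then
        (if (i : ℕ) ≤ (j : ℕ) - 1 then
          shufflePow A B ((j : ℕ) - 1 - (i : ℕ)) (k - 1 - ((j : ℕ) - 1)) else 0) * A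
        else 0) = 0 := by
      by_cases hj1 : 1 ≤ (j : ℕ)
      · rw [dif_pos ⟨by omega, hj1⟩, if_neg (show ¬((i : ℕ) ≤ (j : ℕ) - 1) by omega), zero_mul]
      · rw [dif_neg (by omega)]
    exact hz

end Scomp

section Scomp2
variable {n : ℕ} (k : ℕ) (A B : Matrix (Fin n) (Fin n) ℂ)

lemma S2 (i j : Fin k) :
    (∑ l : Fin k,
      (if (i : ℕ) ≤ (l : ℕ) then shufflePow A B ((l : ℕ) - (i : ℕ)) (k - 1 - (l : ℕ)) else 0) *
      (if (j : ℕ) = (l : ℕ) + 1 then (1 : Matrix (Fin n) (Fin n) ℂ) else 0))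
    = Fn k A B ((i : ℕ) + 1) (j : ℕ) := by
  have hsum : ∀ l : Fin k,
      (if (i : ℕ) ≤ (l : ℕ) then shufflePow A B ((l : ℕ) - (i : ℕ)) (k - 1 - (l : ℕ)) else 0) *
      (if (j : ℕ) = (l : ℕ) + 1 then (1 : Matrix (Fin n) (Fin n) ℂ) else 0)
      = (if (j : ℕ) = (l : ℕ) + 1 then
          (if (i : ℕ) ≤ (l : ℕ) then shufflePow A B ((l : ℕ) - (i : ℕ)) (k - 1 - (l : ℕ)) else 0)
        else 0) := by
    intro l
    by_cases h2 : (j : ℕ) = (l : ℕ) + 1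
    · rw [if_pos h2, if_pos h2, mul_one]
    · rw [if_neg h2, if_neg h2, mul_zero]
  rw [Finset.sum_congr rfl (fun l _ => hsum l), sum_ite_val' (j : ℕ) _]
  simp only [Fn, Fin.val_mk]
  by_cases h : (i : ℕ) + 1 ≤ (j : ℕ)
  · rw [dif_pos (⟨by omega, by omega⟩ : (j : ℕ) - 1 < k ∧ 1 ≤ (j : ℕ)),
      if_pos (show (i : ℕ) ≤ (j : ℕ) - 1 by omega), if_pos h]
    have a3 : (j : ℕ) - 1 - (i : ℕ) = (j : ℕ) - ((i : ℕ) + 1) := by omega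
    have a4 : k - 1 - ((j : ℕ) - 1) = k - (j : ℕ) := by omega
    rw [a3, a4]
  · rw [if_neg h]
    by_cases hj1 : 1 ≤ (j : ℕ)
    · rw [dif_pos ⟨by omega, hj1⟩, if_neg (show ¬((i : ℕ) ≤ (j : ℕ) - 1) by omega)]
    · rw [dif_neg (by omega)]

lemma S3 (i : Fin k) :
    (∑ l : Fin k,
      (if (i : ℕ) ≤ (l : ℕ) then shufflePow A B ((l : ℕ) - (i : ℕ)) (k - 1 - (l : ℕ)) else 0) *
      (if (l : ℕ) = k - 1 then A else 0))
    = Gn k A B (i : ℕ) := by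
  have hsum : ∀ l : Fin k,
      (if (i : ℕ) ≤ (l : ℕ) then shufflePow A B ((l : ℕ) - (i : ℕ)) (k - 1 - (l : ℕ)) else 0) *
      (if (l : ℕ) = k - 1 then A else 0)
      = (if (l : ℕ) = k - 1 then
          (if (i : ℕ) ≤ (l : ℕ) then shufflePow A B ((l : ℕ) - (i : ℕ)) (k - 1 - (l : ℕ)) else 0) * A
        else 0) := by
    intro l
    by_cases h2 : (l : ℕ) = k - 1
    · rw [if_pos h2, if_pos h2]
    · rw [if_neg h2, if_neg h2, mul_zero]
  have hik : (i : ℕ) < k := i.isLt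
  rw [Finset.sum_congr rfl (fun l _ => hsum l), sum_ite_val (k - 1) _,
    dif_pos (show k - 1 < k by omega)]
  simp only [Gn, Fin.val_mk]
  rw [if_pos (show (i : ℕ) ≤ k - 1 by omega)]
  have a1 : k - 1 - (k - 1) = 0 := by omega
  have a2 : k - (i : ℕ) = (k - 1 - (i : ℕ)) + 1 := by omega
  rw [a1]
  conv_rhs => rw [a2, sp_succ_zero]

lemma S4 (i : Fin k) :
    (∑ l : Fin k,
      (if (i : ℕ) ≤ (l : ℕ) then shufflePow A B ((l : ℕ) - (i : ℕ)) (k - 1 - (l : ℕ)) else 0) *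
      (if (l : ℕ) = k - 1 then (1 : Matrix (Fin n) (Fin n) ℂ) else 0))
    = Gn k A B ((i : ℕ) + 1) := by
  have hsum : ∀ l : Fin k,
      (if (i : ℕ) ≤ (l : ℕ) then shufflePow A B ((l : ℕ) - (i : ℕ)) (k - 1 - (l : ℕ)) else 0) *
      (if (l : ℕ) = k - 1 then (1 : Matrix (Fin n) (Fin n) ℂ) else 0)
      = (if (l : ℕ) = k - 1 then
          (if (i : ℕ) ≤ (l : ℕ) then shufflePow A B ((l : ℕ) - (i : ℕ)) (k - 1 - (l : ℕ)) else 0)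
        else 0) := by
    intro l
    by_cases h2 : (l : ℕ) = k - 1
    · rw [if_pos h2, if_pos h2, mul_one]
    · rw [if_neg h2, if_neg h2, mul_zero]
  have hik : (i : ℕ) < k := i.isLt
  rw [Finset.sum_congr rfl (fun l _ => hsum l), sum_ite_val (k - 1) _,
    dif_pos (show k - 1 < k by omega)]
  simp only [Gn, Fin.val_mk]
  rw [if_pos (show (i : ℕ) ≤ k - 1 by omega)]
  have a1 : k - 1 - (k - 1) = 0 := by omega
  have a2 : k - ((i : ℕ) + 1) = k - 1 - (i : ℕ) := by omega
  rw [a1, a2]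

lemma WA_eq : Wmat k A B * scriptA k A B
    = bLift k (fun i j => Fn k A B (i : ℕ) (j : ℕ)) := by
  rw [Wmat_eq, scriptA_eq, bLift_mul]
  exact bLift_congr k _ _ (fun i j => S1 k A B i j)

lemma WS_eq : Wmat k A B * blockShift k n
    = bLift k (fun i j => Fn k A B ((i : ℕ) + 1) (j : ℕ)) := by
  rw [Wmat_eq, blockShift_eq, bLift_mul]
  exact bLift_congr k _ _ (fun i j => S2 k A B i j)

lemma WB_eq : Wmat k A B * scriptB k A
    = bLiftC k (fun i => Gn k A B (i : ℕ)) := by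
  rw [Wmat_eq, scriptB_eq, bLift_mul_liftC]
  exact bLiftC_congr k _ _ (fun i => S3 k A B i)

lemma Wb_eq : Wmat k A B * blockBottom k n
    = bLiftC k (fun i => Gn k A B ((i : ℕ) + 1)) := by
  rw [Wmat_eq, blockBottom_eq, bLift_mul_liftC]
  exact bLiftC_congr k _ _ (fun i => S4 k A B i)

lemma T1 (i j : Fin k) :
    (∑ l : Fin k, (Fn k A B (l : ℕ) (i : ℕ))ᵀ * Fn k A B (l : ℕ) (j : ℕ))
    - (∑ l : Fin k, (Fn k A B ((l : ℕ) + 1) (i : ℕ))ᵀ * Fn k A B ((l : ℕ) + 1) (j : ℕ))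
    = (shufflePow A B (i : ℕ) (k - (i : ℕ)))ᵀ * shufflePow A B (j : ℕ) (k - (j : ℕ)) := by
  rw [Fin.sum_univ_eq_sum_range (fun l => (Fn k A B l (i : ℕ))ᵀ * Fn k A B l (j : ℕ)) k,
    Fin.sum_univ_eq_sum_range (fun l => (Fn k A B (l + 1) (i : ℕ))ᵀ * Fn k A B (l + 1) (j : ℕ)) k,
    ← Finset.sum_sub_distrib,
    Finset.sum_range_sub' (fun l => (Fn k A B l (i : ℕ))ᵀ * Fn k A B l (j : ℕ)) k]
  have h2 : Fn k A B k (i : ℕ) = 0 := by rw [Fn, if_neg]; have := i.isLt; omega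
  rw [h2]
  simp [Fn]

lemma T2 (i : Fin k) :
    (∑ l : Fin k, (Fn k A B (l : ℕ) (i : ℕ))ᵀ * Gn k A B (l : ℕ))
    - (∑ l : Fin k, (Fn k A B ((l : ℕ) + 1) (i : ℕ))ᵀ * Gn k A B ((l : ℕ) + 1))
    = (shufflePow A B (i : ℕ) (k - (i : ℕ)))ᵀ * shufflePow A B k 0 := by
  rw [Fin.sum_univ_eq_sum_range (fun l => (Fn k A B l (i : ℕ))ᵀ * Gn k A B l) k,
    Fin.sum_univ_eq_sum_range (fun l => (Fn k A B (l + 1) (i : ℕ))ᵀ * Gn k A B (l + 1)) k,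
    ← Finset.sum_sub_distrib,
    Finset.sum_range_sub' (fun l => (Fn k A B l (i : ℕ))ᵀ * Gn k A B l) k]
  have h2 : Fn k A B k (i : ℕ) = 0 := by rw [Fn, if_neg]; have := i.isLt; omega
  rw [h2]
  simp [Fn, Gn]

lemma T3 (hk : 1 ≤ k) :
    (∑ l : Fin k, (Gn k A B (l : ℕ))ᵀ * Gn k A B (l : ℕ))
    - (∑ l : Fin k, (Gn k A B ((l : ℕ) + 1))ᵀ * Gn k A B ((l : ℕ) + 1))
    = (shufflePow A B k 0)ᵀ * shufflePow A B k 0 - 1 := by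
  rw [Fin.sum_univ_eq_sum_range (fun l => (Gn k A B l)ᵀ * Gn k A B l) k,
    Fin.sum_univ_eq_sum_range (fun l => (Gn k A B (l + 1))ᵀ * Gn k A B (l + 1)) k,
    ← Finset.sum_sub_distrib,
    Finset.sum_range_sub' (fun l => (Gn k A B l)ᵀ * Gn k A B l) k]
  have h2 : Gn k A B k = 1 := by rw [Gn, Nat.sub_self, sp_zz]
  rw [h2, Matrix.transpose_one, one_mul]
  simp [Gn]

end Scomp2

lemma rearr {α β γ : Type*} [Fintype α] [Fintype β] [Fintype γ]
    (W : Matrix α α ℂ) (X : Matrix α β ℂ) (Y : Matrix α γ ℂ) :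
    Xᵀ * Wᵀ * W * Y = (W * X)ᵀ * (W * Y) := by
  simp only [Matrix.transpose_mul, Matrix.mul_assoc]

/- STATEMENT 11: with D_k = A^{[k]},
𝒜_kᵀ W_kᵀ W_k 𝒜_k − A_kᵀ W_kᵀ W_k A_k = C_kᵀ C_k,
𝒜_kᵀ W_kᵀ W_k ℬ_k − A_kᵀ W_kᵀ W_k B_k = C_kᵀ D_k,
ℬ_kᵀ W_kᵀ W_k ℬ_k − B_kᵀ W_kᵀ W_k B_k = D_kᵀ D_k − I_n. -/
theorem stmt11 {n : ℕ} (k : ℕ) (hk : 1 ≤ k) (A B : Matrix (Fin n) (Fin n) ℂ) :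
    ((scriptA k A B)ᵀ * (Wmat k A B)ᵀ * Wmat k A B * scriptA k A B -
        (blockShift k n)ᵀ * (Wmat k A B)ᵀ * Wmat k A B * blockShift k n =
      (Cmat k A B)ᵀ * Cmat k A B) ∧
    ((scriptA k A B)ᵀ * (Wmat k A B)ᵀ * Wmat k A B * scriptB k A -
        (blockShift k n)ᵀ * (Wmat k A B)ᵀ * Wmat k A B * blockBottom k n =
      (Cmat k A B)ᵀ * shufflePow A B k 0) ∧
    ((scriptB k A)ᵀ * (Wmat k A B)ᵀ * Wmat k A B * scriptB k A -
        (blockBottom k n)ᵀ * (Wmat k A B)ᵀ * Wmat k A B * blockBottom k n =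
      (shufflePow A B k 0)ᵀ * shufflePow A B k 0 - 1) := by
  refine ⟨?_, ?_, ?_⟩
  · rw [rearr, rearr, WA_eq, WS_eq, bLift_transpose, bLift_transpose, bLift_mul, bLift_mul,
      bLift_sub, Cmat_eq, bLiftR_transpose, bLiftC_mul_liftR]
    exact bLift_congr k _ _ (fun i j => T1 k A B i j)
  · rw [rearr, rearr, WA_eq, WB_eq, WS_eq, Wb_eq, bLift_transpose, bLift_transpose,
      bLift_mul_liftC, bLift_mul_liftC, bLiftC_sub, Cmat_eq, bLiftR_transpose, bLiftC_mul_mat]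
    exact bLiftC_congr k _ _ (fun i => T2 k A B i)
  · rw [rearr, rearr, WB_eq, Wb_eq, bLiftC_transpose, bLiftC_transpose,
      bLiftR_mul_liftC, bLiftR_mul_liftC]
    exact T3 k A B hk
end

section
/- Let A, B ∈ ℂ^{n×n}. Then ρ(A + B e^{−iθ}) < 1 for all θ ∈ ℝ if and only if A + B is Schur stable (ρ(A+B) < 1) and for all θ ∈ ℝ: det((A + Be^{−iθ})ᴴ ⊗ (A + Be^{−iθ}) − I_n ⊗ I_n) ≠ 0. -/
/-!
Write `M θ = A + e^{-iθ} B`. Products of eigenvalues of two matrices are eigenvalues of their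
Kronecker product, and the eigenvalues of `Mᴴ` are the conjugates of those of `M`; so an eigenvalue
`λ` of `M θ` on the unit circle makes `1 = |λ|²` an eigenvalue of `(M θ)ᴴ ⊗ M θ`. Conversely, if
`ρ(M) < 1` and `(Mᴴ ⊗ M) vec X = vec X`, then `X = M X M̄ = Mᵏ X M̄ᵏ`, which tends to `0` by
Gelfand's formula.

For the reverse implication, the set of `θ` with `ρ(M θ) < 1` is open, because the spectrum is
upper hemicontinuous. Since no eigenvalue ever lies on the unit circle, it is also the set where
`ρ(M θ) ≤ 1`, which is closed because eigenvalues, as roots of the characteristic polynomial,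
depend lower hemicontinuously on the matrix. It contains `θ = 0`, so it is all of `ℝ`.
-/

open Matrix Kronecker Filter Topology Polynomial
open scoped NNReal ENNReal

section BanachAlgebra

variable {A : Type*} [NormedRing A] [NormedAlgebra ℂ A] [CompleteSpace A]

theorem tendsto_pow_atTop_nhds_zero_of_forall_norm_lt_one {a : A}
    (ha : ∀ μ ∈ spectrum ℂ a, ‖μ‖ < 1) : Tendsto (a ^ ·) atTop (𝓝 0) := by
  rcases subsingleton_or_nontrivial A with _ | _
  · simpa only [Subsingleton.elim _ (0 : A)] using tendsto_const_nhds
  obtain ⟨r, hρr, hr1⟩ := ENNReal.lt_iff_exists_nnreal_btwn.mp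
    (spectrum.spectralRadius_lt_of_forall_lt a (r := 1) fun μ hμ ↦ mod_cast ha μ hμ)
  rw [ENNReal.coe_lt_coe] at hr1
  have hle : ∀ᶠ k in atTop, ‖a ^ k‖ ≤ r ^ k := by
    have gelfand := spectrum.pow_nnnorm_pow_one_div_tendsto_nhds_spectralRadius a
    filter_upwards [gelfand.eventually_lt_const hρr, eventually_ge_atTop 1] with k hk hk1
    rw [one_div, ENNReal.rpow_inv_lt_iff (by positivity), ENNReal.rpow_natCast] at hk
    exact_mod_cast hk.le
  exact squeeze_zero_norm' hle (tendsto_pow_atTop_nhds_zero_of_lt_one r.2 hr1)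

theorem eq_zero_of_mul_mul_eq_self {a b x : A} (ha : ∀ μ ∈ spectrum ℂ a, ‖μ‖ < 1)
    (hb : ∀ μ ∈ spectrum ℂ b, ‖μ‖ < 1) (h : a * x * b = x) : x = 0 := by
  have hpow (k : ℕ) : a ^ k * x * b ^ k = x := by
    induction k with
    | zero => simp
    | succ k ih =>
      calc a ^ (k + 1) * x * b ^ (k + 1) = a ^ k * (a * x * b) * b ^ k := by
            rw [pow_succ a, pow_succ' b]; simp only [mul_assoc]
        _ = x := by rw [h, ih]
  have hlim : Tendsto (fun k ↦ a ^ k * x * b ^ k) atTop (𝓝 0) := by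
    simpa using ((tendsto_pow_atTop_nhds_zero_of_forall_norm_lt_one ha).mul_const x).mul
      (tendsto_pow_atTop_nhds_zero_of_forall_norm_lt_one hb)
  simp only [hpow] at hlim
  exact tendsto_nhds_unique tendsto_const_nhds hlim

end BanachAlgebra

namespace Matrix

variable {n : Type*} [Fintype n] [DecidableEq n]

section Field

variable {K : Type*} [Field K]

theorem mem_spectrum_iff_exists_mulVec_eq_smul {M : Matrix n n K} {μ : K} :
    μ ∈ spectrum K M ↔ ∃ v ≠ 0, M *ᵥ v = μ • v := by
  rw [spectrum.mem_iff, isUnit_iff_isUnit_det, isUnit_iff_ne_zero, not_not,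
    ← exists_mulVec_eq_zero_iff]
  simp only [Algebra.algebraMap_eq_smul_one, sub_mulVec, smul_mulVec, one_mulVec, sub_eq_zero,
    eq_comm]

theorem spectrum_transpose (M : Matrix n n K) : spectrum K Mᵀ = spectrum K M := by
  ext μ
  simp only [spectrum.mem_iff, isUnit_iff_isUnit_det, Algebra.algebraMap_eq_smul_one]
  rw [← det_transpose, transpose_sub, transpose_smul, transpose_one, transpose_transpose]

theorem spectrum_conjTranspose [StarRing K] (M : Matrix n n K) :
    spectrum K Mᴴ = star (spectrum K M) := by
  ext μ
  simp only [Set.mem_star, spectrum.mem_iff, isUnit_iff_isUnit_det, Algebra.algebraMap_eq_smul_one]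
  rw [← isUnit_star, ← det_conjTranspose, conjTranspose_sub, conjTranspose_smul,
    conjTranspose_one, conjTranspose_conjTranspose]

theorem one_mem_spectrum_iff_det_sub_one_eq_zero (M : Matrix n n K) :
    1 ∈ spectrum K M ↔ (M - 1).det = 0 := by
  rw [spectrum.mem_iff, map_one, ← neg_sub, IsUnit.neg_iff, isUnit_iff_isUnit_det,
    isUnit_iff_ne_zero, not_not]

theorem mul_mem_spectrum_kronecker {m : Type*} [Fintype m] [DecidableEq m] {A : Matrix m m K}
    {B : Matrix n n K} {a b : K} (ha : a ∈ spectrum K A) (hb : b ∈ spectrum K B) :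
    a * b ∈ spectrum K (A ⊗ₖ B) := by
  obtain ⟨u, hu, hAu⟩ := mem_spectrum_iff_exists_mulVec_eq_smul.mp ha
  obtain ⟨v, hv, hBv⟩ := mem_spectrum_iff_exists_mulVec_eq_smul.mp hb
  refine mem_spectrum_iff_exists_mulVec_eq_smul.mpr ⟨vec (vecMulVec v u), ?_, ?_⟩
  · obtain ⟨i, hi⟩ := Function.ne_iff.mp hv
    obtain ⟨j, hj⟩ := Function.ne_iff.mp hu
    exact fun h ↦ mul_ne_zero hi hj (congrFun h (j, i))
  · rw [kronecker_mulVec_vec, mul_vecMulVec, vecMulVec_mul, vecMul_transpose, hAu, hBv,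
      smul_vecMulVec, vecMulVec_smul, smul_smul, mul_comm, vec_smul]

end Field

theorem one_notMem_spectrum_kronecker {A B : Matrix n n ℂ} (hA : ∀ μ ∈ spectrum ℂ A, ‖μ‖ < 1)
    (hB : ∀ μ ∈ spectrum ℂ B, ‖μ‖ < 1) : 1 ∉ spectrum ℂ (B ⊗ₖ A) := by
  let _ : NormedRing (Matrix n n ℂ) := Matrix.linftyOpNormedRing
  let _ : NormedAlgebra ℂ (Matrix n n ℂ) := Matrix.linftyOpNormedAlgebra
  rw [mem_spectrum_iff_exists_mulVec_eq_smul]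
  rintro ⟨v, hX, hAXB⟩
  obtain ⟨X, rfl⟩ := vec_bijective.surjective v
  rw [kronecker_mulVec_vec, one_smul, vec_inj] at hAXB
  rw [Ne, vec_eq_zero_iff] at hX
  exact hX (eq_zero_of_mul_mul_eq_self hA (by rwa [spectrum_transpose]) hAXB)

theorem one_notMem_spectrum_conjTranspose_kronecker_self {M : Matrix n n ℂ}
    (hM : ∀ μ ∈ spectrum ℂ M, ‖μ‖ < 1) : 1 ∉ spectrum ℂ (Mᴴ ⊗ₖ M) :=
  one_notMem_spectrum_kronecker hM fun μ hμ ↦ by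
    rw [spectrum_conjTranspose, Set.mem_star] at hμ
    simpa using hM _ hμ

theorem one_mem_spectrum_conjTranspose_kronecker_self {𝕜 : Type*} [RCLike 𝕜] {M : Matrix n n 𝕜}
    {μ : 𝕜} (hμ : μ ∈ spectrum 𝕜 M) (h : ‖μ‖ = 1) : 1 ∈ spectrum 𝕜 (Mᴴ ⊗ₖ M) := by
  have hstar : star μ ∈ spectrum 𝕜 Mᴴ := by rwa [spectrum_conjTranspose, Set.mem_star, star_star]
  simpa [RCLike.star_def, RCLike.conj_mul, h] using mul_mem_spectrum_kronecker hstar hμ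

section AlgClosed

variable {𝕜 : Type*} [NormedField 𝕜] [IsAlgClosed 𝕜]

theorem pow_card_le_norm_eval_charpoly (M : Matrix n n 𝕜) {z : 𝕜} {ε : ℝ} (hε : 0 ≤ ε)
    (h : ∀ μ ∈ spectrum 𝕜 M, ε ≤ ‖z - μ‖) : ε ^ Fintype.card n ≤ ‖M.charpoly.eval z‖ := by
  have hsplit := IsAlgClosed.splits M.charpoly
  have hcard : Multiset.card M.charpoly.roots = Fintype.card n := by
    rw [splits_iff_card_roots.mp hsplit, charpoly_natDegree_eq_dim]
  have hroots : ∀ r ∈ M.charpoly.roots, ε ≤ ‖z - r‖ := fun r hr ↦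
    h r (mem_spectrum_iff_isRoot_charpoly.mpr (isRoot_of_mem_roots hr))
  calc ε ^ Fintype.card n = (M.charpoly.roots.map fun _ ↦ ε).prod := by
        rw [Multiset.map_const', Multiset.prod_replicate, hcard]
    _ ≤ (M.charpoly.roots.map fun r ↦ ‖z - r‖).prod :=
        Multiset.prod_map_le_prod_map₀ _ _ (fun _ _ ↦ hε) hroots
    _ = ‖M.charpoly.eval z‖ := by
        rw [hsplit.eval_eq_prod_roots_of_monic M.charpoly_monic]
        exact M.charpoly.roots.prod_hom' (normHom : 𝕜 →*₀ ℝ) (z - ·)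

theorem lowerHemicontinuous_spectrum :
    LowerHemicontinuous (spectrum 𝕜 : Matrix n n 𝕜 → Set 𝕜) := by
  refine lowerHemicontinuous_iff.mpr fun M₀ ↦ lowerHemicontinuousAt_iff.mpr ?_
  rintro u hu ⟨μ, hμ, hμu⟩
  obtain ⟨ε, hε, hball⟩ := Metric.isOpen_iff.mp hu μ hμu
  have hcont : Continuous fun M : Matrix n n 𝕜 ↦ M.charpoly.eval μ := by
    simp only [eval_charpoly]
    fun_prop
  have hsmall : ∀ᶠ M in 𝓝 M₀, ‖M.charpoly.eval μ‖ < ε ^ Fintype.card n := by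
    refine (hcont.tendsto M₀).norm.eventually_lt_const ?_
    rw [mem_spectrum_iff_isRoot_charpoly.mp hμ, norm_zero]
    positivity
  filter_upwards [hsmall] with M hM
  by_contra hempty
  refine (pow_card_le_norm_eval_charpoly M hε.le fun ν hν ↦ ?_).not_gt hM
  by_contra hνμ
  exact hempty ⟨ν, hν, hball (by rwa [Metric.mem_ball, dist_comm, dist_eq_norm, ← not_le])⟩

end AlgClosed

theorem forall_mem_spectrum_norm_lt_of_continuous {X : Type*} [TopologicalSpace X]
    [PreconnectedSpace X] {M : X → Matrix n n ℂ} (hM : Continuous M) {r : ℝ}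
    (hr : ∀ x, ∀ μ ∈ spectrum ℂ (M x), ‖μ‖ ≠ r) {x₀ : X}
    (h₀ : ∀ μ ∈ spectrum ℂ (M x₀), ‖μ‖ < r) (x : X) : ∀ μ ∈ spectrum ℂ (M x), ‖μ‖ < r := by
  let _ : NormedRing (Matrix n n ℂ) := Matrix.linftyOpNormedRing
  let _ : NormedAlgebra ℂ (Matrix n n ℂ) := Matrix.linftyOpNormedAlgebra
  set S := (spectrum ℂ ∘ M) ⁻¹' Set.Iic (Metric.ball 0 r)
  have hS : S = (spectrum ℂ ∘ M) ⁻¹' Set.Iic (Metric.closedBall 0 r) := by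
    ext x
    refine ⟨fun h ↦ h.trans Metric.ball_subset_closedBall, fun h μ hμ ↦ ?_⟩
    exact mem_ball_zero_iff.mpr ((mem_closedBall_zero_iff.mp (h hμ)).lt_of_ne (hr x μ hμ))
  have hclopen : IsClopen S :=
    ⟨hS ▸ lowerHemicontinuous_iff_isClosed_preimage_Iic.mp (lowerHemicontinuous_spectrum.comp hM)
      _ Metric.isClosed_closedBall,
    upperHemicontinuous_iff_isOpen_preimage_Iic.mp
      ((upperHemicontinuous_spectrum ℂ (Matrix n n ℂ)).comp hM) _ Metric.isOpen_ball⟩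
  have hSuniv := hclopen.eq_univ ⟨x₀, fun μ hμ ↦ mem_ball_zero_iff.mpr (h₀ μ hμ)⟩
  exact fun μ hμ ↦ mem_ball_zero_iff.mp ((hSuniv ▸ Set.mem_univ x : x ∈ S) hμ)

end Matrix

theorem stmt16 {n : ℕ} (A B : Matrix (Fin n) (Fin n) ℂ) :
    (∀ θ : ℝ, ∀ μ ∈ spectrum ℂ (A + Complex.exp (-(θ : ℂ) * Complex.I) • B), ‖μ‖ < 1) ↔
      ((∀ μ ∈ spectrum ℂ (A + B), ‖μ‖ < 1) ∧
        ∀ θ : ℝ,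
          ((A + Complex.exp (-(θ : ℂ) * Complex.I) • B)ᴴ ⊗ₖ
              (A + Complex.exp (-(θ : ℂ) * Complex.I) • B) -
            (1 : Matrix (Fin n) (Fin n) ℂ) ⊗ₖ (1 : Matrix (Fin n) (Fin n) ℂ)).det ≠ 0) := by
  simp only [one_kronecker_one, ne_eq, ← one_mem_spectrum_iff_det_sub_one_eq_zero]
  constructor
  · intro h
    exact ⟨by simpa using h 0, fun θ ↦ one_notMem_spectrum_conjTranspose_kronecker_self (h θ)⟩
  · rintro ⟨h₀, h⟩
    refine forall_mem_spectrum_norm_lt_of_continuous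
      (M := fun θ : ℝ ↦ A + Complex.exp (-(θ : ℂ) * Complex.I) • B) (by fun_prop)
      (fun θ μ hμ h1 ↦ h θ (one_mem_spectrum_conjTranspose_kronecker_self hμ h1)) (x₀ := 0) ?_
    simpa using h₀
end

section
/- Let A, B ∈ ℝ^{n×n} and suppose there exist symmetric positive definite X, Y ∈ ℝ^{n×n} such that [[A, B],[I_n, 0]]ᵀ · diag(X, Y) · [[A, B],[I_n, 0]] − diag(X, Y) < 0. Then ρ(A + B e^{−iθ}) < 1 for all θ ∈ [0, 2π]. -/
/-!
Let `μ` be an eigenvalue of `A + c B`, `|c| = 1`, with eigenvector `w`. The companion matrix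
`M = [[A, B], [I, 0]]` maps the test vector `v = (w, c w)` to `(μ w, w)`, so the complexified
Stein inequality `(M v)* D (M v) < v* D v` for `D = diag(X, Y)` reads
`|μ|² w*Xw + w*Yw < w*Xw + w*Yw`. Since `w*Xw > 0`, this forces `|μ| < 1`.
-/

open Matrix Complex
open scoped ComplexOrder

namespace Matrix

variable {n : Type*} [Fintype n]

theorem exists_mulVec_eq_smul_of_mem_spectrum [DecidableEq n] {K : Type*} [Field K]
    {M : Matrix n n K} {μ : K} (hμ : μ ∈ spectrum K M) : ∃ w ≠ 0, M *ᵥ w = μ • w := by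
  rw [← spectrum_toLin', ← Module.End.hasEigenvalue_iff_mem_spectrum] at hμ
  obtain ⟨w, hw⟩ := hμ.exists_hasEigenvector
  exact ⟨w, hw.2, hw.apply_eq_smul⟩

open scoped MatrixOrder in
theorem PosDef.map_ofReal {𝕜 : Type*} [RCLike 𝕜] {P : Matrix n n ℝ} (hP : P.PosDef) :
    (P.map ((↑) : ℝ → 𝕜)).PosDef := by
  classical
  have hunit : IsUnit (P.map ((↑) : ℝ → 𝕜)) := hP.isUnit.map (algebraMap ℝ 𝕜).mapMatrix
  obtain ⟨S, hS, -, rfl⟩ := CFC.exists_sqrt_of_isSelfAdjoint_of_quasispectrumRestricts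
    hP.isHermitian (QuasispectrumRestricts.nnreal_of_nonneg hP.posSemidef.nonneg)
  have hmap : (S * S).map ((↑) : ℝ → 𝕜) = (S.map (↑))ᴴ * S.map (↑) := by
    rw [← conjTranspose_map _ fun _ => (RCLike.conj_ofReal _).symm, show Sᴴ = S from hS]
    exact Matrix.map_mul (L := S) (M := S) (f := algebraMap ℝ 𝕜)
  rw [hmap] at hunit ⊢
  exact (posSemidef_conjTranspose_mul_self _).posDef_iff_isUnit.mpr hunit

theorem map_ofReal_sub_transpose_mul_mul {𝕜 : Type*} [RCLike 𝕜] (D M : Matrix n n ℝ) :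
    (D - Mᵀ * D * M).map ((↑) : ℝ → 𝕜) =
      D.map (↑) - (M.map ((↑) : ℝ → 𝕜))ᴴ * D.map (↑) * M.map (↑) := by
  classical
  rw [← conjTranspose_map _ fun _ => (RCLike.conj_ofReal _).symm,
    conjTranspose_eq_transpose_of_trivial]
  change (algebraMap ℝ 𝕜).mapMatrix _ = _
  rw [map_sub, map_mul, map_mul]
  rfl

theorem PosDef.star_dotProduct_mulVec_lt {𝕜 : Type*} [RCLike 𝕜] {D M : Matrix n n 𝕜}
    (h : (D - Mᴴ * D * M).PosDef) {v : n → 𝕜} (hv : v ≠ 0) :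
    star (M *ᵥ v) ⬝ᵥ (D *ᵥ (M *ᵥ v)) < star v ⬝ᵥ (D *ᵥ v) := by
  have := h.dotProduct_mulVec_pos hv
  rwa [sub_mulVec, dotProduct_sub, ← mulVec_mulVec, ← mulVec_mulVec, dotProduct_mulVec _ Mᴴ,
    ← star_mulVec, sub_pos] at this

theorem fromBlocks_one_zero_mulVec_sumElim_smul {R : Type*} [CommSemiring R] [DecidableEq n]
    (A B : Matrix n n R) (c : R) (w : n → R) :
    fromBlocks A B 1 0 *ᵥ Sum.elim w (c • w) = Sum.elim ((A + c • B) *ᵥ w) w := by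
  simp [fromBlocks_mulVec, add_mulVec, mulVec_smul, smul_mulVec]

theorem star_sumElim_dotProduct_fromBlocks_zero_zero_mulVec {R : Type*} [CommSemiring R]
    [StarRing R] {m : Type*} [Fintype m] (X : Matrix n n R) (Y : Matrix m m R)
    (a : n → R) (b : m → R) :
    star (Sum.elim a b) ⬝ᵥ (fromBlocks X 0 0 Y *ᵥ Sum.elim a b) =
      star a ⬝ᵥ (X *ᵥ a) + star b ⬝ᵥ (Y *ᵥ b) := by
  simp [fromBlocks_mulVec, Function.star_sumElim]

theorem norm_eigenvalue_lt_one_of_companion_stein {𝕜 : Type*} [RCLike 𝕜] [DecidableEq n]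
    {A B X Y : Matrix n n 𝕜} (hX : X.PosDef)
    (h : (fromBlocks X 0 0 Y -
      (fromBlocks A B 1 0)ᴴ * fromBlocks X 0 0 Y * fromBlocks A B 1 0).PosDef)
    {c μ : 𝕜} (hc : ‖c‖ = 1) {w : n → 𝕜} (hw : w ≠ 0) (hμ : (A + c • B) *ᵥ w = μ • w) :
    ‖μ‖ < 1 := by
  have hv : Sum.elim w (c • w) ≠ 0 := fun h0 => hw (funext fun i => congrFun h0 (Sum.inl i))
  have key := h.star_dotProduct_mulVec_lt hv
  rw [fromBlocks_one_zero_mulVec_sumElim_smul, hμ,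
    star_sumElim_dotProduct_fromBlocks_zero_zero_mulVec,
    star_sumElim_dotProduct_fromBlocks_zero_zero_mulVec] at key
  simp only [star_smul, mulVec_smul, smul_dotProduct, dotProduct_smul, smul_eq_mul, ← mul_assoc,
    RCLike.star_def, RCLike.mul_conj, hc] at key
  obtain ⟨q, hq, hqX⟩ := RCLike.pos_iff_exists_ofReal.mp (hX.dotProduct_mulVec_pos hw)
  rw [← hqX, RCLike.ofReal_one, one_pow, one_mul, add_lt_add_iff_right, ← RCLike.ofReal_pow,
    ← RCLike.ofReal_mul, RCLike.ofReal_lt_ofReal] at key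
  have hμ2 : ‖μ‖ ^ 2 < 1 := (mul_lt_iff_lt_one_left hq).mp key
  exact (sq_lt_one_iff₀ (norm_nonneg μ)).mp hμ2

end Matrix

theorem stmt19_general {n : ℕ} (A B : Matrix (Fin n) (Fin n) ℝ)
    (X Y : Matrix (Fin n) (Fin n) ℝ) (hX : X.PosDef)
    (h : (-((Matrix.fromBlocks A B (1 : Matrix (Fin n) (Fin n) ℝ) 0)ᵀ *
          Matrix.fromBlocks X 0 0 Y *
          Matrix.fromBlocks A B (1 : Matrix (Fin n) (Fin n) ℝ) 0 -
        Matrix.fromBlocks X 0 0 Y)).PosDef) :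
    ∀ θ ∈ Set.Icc (0 : ℝ) (2 * Real.pi),
      ∀ μ ∈ spectrum ℂ
        (A.map (Complex.ofReal) +
          Complex.exp (-(θ : ℂ) * Complex.I) • B.map (Complex.ofReal)),
        ‖μ‖ < 1 := by
  intro θ _ μ hμ
  obtain ⟨w, hw, hwμ⟩ := exists_mulVec_eq_smul_of_mem_spectrum hμ
  refine norm_eigenvalue_lt_one_of_companion_stein (Y := Y.map ofReal) hX.map_ofReal ?_ ?_ hw hwμ
  · convert h.map_ofReal using 1
    rw [neg_sub, map_ofReal_sub_transpose_mul_mul]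
    simp [fromBlocks_map]
  · rw [← ofReal_neg, norm_exp_ofReal_mul_I]

theorem stmt19 {n : ℕ} (A B : Matrix (Fin n) (Fin n) ℝ)
    (X Y : Matrix (Fin n) (Fin n) ℝ) (hX : X.PosDef) (hY : Y.PosDef)
    (h : (-((Matrix.fromBlocks A B (1 : Matrix (Fin n) (Fin n) ℝ) 0)ᵀ *
          Matrix.fromBlocks X 0 0 Y *
          Matrix.fromBlocks A B (1 : Matrix (Fin n) (Fin n) ℝ) 0 -
        Matrix.fromBlocks X 0 0 Y)).PosDef) :
    ∀ θ ∈ Set.Icc (0 : ℝ) (2 * Real.pi),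
      ∀ μ ∈ spectrum ℂ
        (A.map (Complex.ofReal) +
          Complex.exp (-(θ : ℂ) * Complex.I) • B.map (Complex.ofReal)),
        ‖μ‖ < 1 :=
  stmt19_general A B X Y hX h
end
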